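/- arXiv:2210.15352 — 3 statements merged into one kernel-verified Lean document; each statement's English description precedes it below -/
import Mathlib

section
/- For every integer n ≥ 1 there exist δ > 0 and C > 0 such that for every z ∈ ℂ with 0 < |z| < δ one has |ξ_n(z) − (−1/(2n+1) − 2z²/((2n+3)(2n+1)(2n−1)))| ≤ C·|z|³. -/
open Complex

/-- Spherical Bessel function of the first kind (series definition). -/
noncomputable def jb (n : ℕ) (z : ℂ) : ℂ :=
  ∑' p : ℕ, ((-1 : ℂ) ^ p * z ^ (n + 2 * p)) /
    ((2 : ℂ) ^ p * (Nat.factorial p : ℂ) * ∏ q ∈ Finset.range (n + p + 1), (2 * (q : ℂ) + 1))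

/-- Spherical Bessel function of the second kind (series definition). -/
noncomputable def yb (n : ℕ) (z : ℂ) : ℂ :=
  -((Nat.factorial (2 * n) : ℂ) / ((2 : ℂ) ^ n * (Nat.factorial n : ℂ))) *
    ∑' p : ℕ, ((-1 : ℂ) ^ p * z ^ (2 * (p : ℤ) - (n : ℤ) - 1)) /
      ((2 : ℂ) ^ p * (Nat.factorial p : ℂ) *
        ∏ q ∈ Finset.Icc 1 p, (-2 * (n : ℂ) + 2 * (q : ℂ) - 1))

/-- Spherical Hankel function of the first kind. -/
noncomputable def hb (n : ℕ) (z : ℂ) : ℂ := jb n z + Complex.I * yb n z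

noncomputable def xiB (n : ℕ) (z : ℂ) : ℂ := -Complex.I * z * jb n z * hb n z

noncomputable def zetaB (n : ℕ) (z : ℂ) : ℂ :=
  1 / 2 - Complex.I * z ^ 2 * deriv (jb n) z * hb n z

noncomputable def faX (n p : ℕ) : ℂ :=
  (-1 : ℂ) ^ p / ((2 : ℂ) ^ p * (Nat.factorial p : ℂ) *
    ∏ q ∈ Finset.range (n + p + 1), (2 * (q : ℂ) + 1))

noncomputable def gaX (n p : ℕ) : ℂ :=
  (-1 : ℂ) ^ p / ((2 : ℂ) ^ p * (Nat.factorial p : ℂ) *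
    ∏ q ∈ Finset.Icc 1 p, (-2 * (n : ℂ) + 2 * (q : ℂ) - 1))

noncomputable def FFX (n : ℕ) (w : ℂ) : ℂ := ∑' p, faX n p * w ^ p
noncomputable def GGX (n : ℕ) (w : ℂ) : ℂ := ∑' p, gaX n p * w ^ p
noncomputable def cBX (n : ℕ) : ℂ := (Nat.factorial (2 * n) : ℂ) / ((2 : ℂ) ^ n * (Nat.factorial n : ℂ))

lemma prodD_ne_zero (m : ℕ) : (∏ q ∈ Finset.range m, (2 * (q : ℂ) + 1)) ≠ 0 := by
  apply Finset.prod_ne_zero_iff.2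
  intro q _
  have h : (2 * (q : ℂ) + 1) = ((2 * q + 1 : ℕ) : ℂ) := by push_cast; ring
  rw [h]
  exact Nat.cast_ne_zero.mpr (Nat.succ_ne_zero _)

lemma norm_faX (n p : ℕ) : ‖faX n p‖ ≤ (1/2 : ℝ) ^ p := by
  have h1 : (1:ℝ) ≤ ‖∏ q ∈ Finset.range (n + p + 1), (2 * (q : ℂ) + 1)‖ := by
    rw [norm_prod]
    have hp : ∏ q ∈ Finset.range (n + p + 1), (1:ℝ) ≤
        ∏ q ∈ Finset.range (n + p + 1), ‖2 * (q : ℂ) + 1‖ := by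
      apply Finset.prod_le_prod (fun _ _ => zero_le_one)
      intro q _
      have h : (2 * (q : ℂ) + 1) = ((2 * q + 1 : ℕ) : ℂ) := by push_cast; ring
      rw [h, Complex.norm_natCast]
      exact_mod_cast Nat.one_le_iff_ne_zero.2 (Nat.succ_ne_zero _)
    simpa using hp
  have hf : (1:ℝ) ≤ (Nat.factorial p : ℝ) := by exact_mod_cast p.factorial_pos
  have h2 : (2:ℝ)^p ≤ ‖(2 : ℂ) ^ p * (Nat.factorial p : ℂ) *
      ∏ q ∈ Finset.range (n + p + 1), (2 * (q : ℂ) + 1)‖ := by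
    rw [norm_mul, norm_mul, norm_pow, Complex.norm_natCast]
    have key : ‖(2:ℂ)‖^p * 1 * 1 ≤ ‖(2:ℂ)‖^p * (Nat.factorial p : ℝ) *
        ‖∏ q ∈ Finset.range (n + p + 1), (2 * (q : ℂ) + 1)‖ :=
      mul_le_mul (mul_le_mul le_rfl hf zero_le_one (by positivity)) h1 zero_le_one (by positivity)
    calc (2:ℝ)^p = ‖(2:ℂ)‖^p * 1 * 1 := by simp [Complex.norm_ofNat]
    _ ≤ _ := key
  rw [faX, norm_div, norm_pow, norm_neg, norm_one, one_pow, div_pow, one_pow]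
  exact one_div_le_one_div_of_le (by positivity) h2

lemma norm_gaX (n p : ℕ) : ‖gaX n p‖ ≤ (1/2 : ℝ) ^ p := by
  have h1 : (1:ℝ) ≤ ‖∏ q ∈ Finset.Icc 1 p, (-2 * (n : ℂ) + 2 * (q : ℂ) - 1)‖ := by
    rw [norm_prod]
    have hp : ∏ q ∈ Finset.Icc 1 p, (1:ℝ) ≤
        ∏ q ∈ Finset.Icc 1 p, ‖-2 * (n : ℂ) + 2 * (q : ℂ) - 1‖ := by
      apply Finset.prod_le_prod (fun _ _ => zero_le_one)
      intro q _
      have he : (-2 * (n : ℂ) + 2 * (q : ℂ) - 1) = ((2 * (q:ℤ) - 2 * n - 1 : ℤ) : ℂ) := by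
        push_cast; ring
      rw [he, Complex.norm_intCast]
      have hne : (2 * (q:ℤ) - 2 * n - 1) ≠ 0 := by omega
      exact_mod_cast Int.one_le_abs hne
    simpa using hp
  have hf : (1:ℝ) ≤ (Nat.factorial p : ℝ) := by exact_mod_cast p.factorial_pos
  have h2 : (2:ℝ)^p ≤ ‖(2 : ℂ) ^ p * (Nat.factorial p : ℂ) *
      ∏ q ∈ Finset.Icc 1 p, (-2 * (n : ℂ) + 2 * (q : ℂ) - 1)‖ := by
    rw [norm_mul, norm_mul, norm_pow, Complex.norm_natCast]
    have key : ‖(2:ℂ)‖^p * 1 * 1 ≤ ‖(2:ℂ)‖^p * (Nat.factorial p : ℝ) *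
        ‖∏ q ∈ Finset.Icc 1 p, (-2 * (n : ℂ) + 2 * (q : ℂ) - 1)‖ :=
      mul_le_mul (mul_le_mul le_rfl hf zero_le_one (by positivity)) h1 zero_le_one (by positivity)
    calc (2:ℝ)^p = ‖(2:ℂ)‖^p * 1 * 1 := by simp [Complex.norm_ofNat]
    _ ≤ _ := key
  rw [gaX, norm_div, norm_pow, norm_neg, norm_one, one_pow, div_pow, one_pow]
  exact one_div_le_one_div_of_le (by positivity) h2

/-- generic second-order tail decomposition -/
lemma tail2X (a : ℕ → ℂ) (ha : ∀ p, ‖a p‖ ≤ (1/2 : ℝ) ^ p) (w : ℂ) (hw : ‖w‖ ≤ 1) :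
    ∃ R : ℂ, ‖R‖ ≤ 2 ∧ ∑' p, a p * w ^ p = a 0 + a 1 * w + w ^ 2 * R := by
  have hb : ∀ (k p : ℕ), ‖a (p + k) * w ^ p‖ ≤ (1/2 : ℝ) ^ p := by
    intro k p
    rw [norm_mul, norm_pow]
    calc ‖a (p + k)‖ * ‖w‖ ^ p ≤ (1/2 : ℝ) ^ (p + k) * 1 :=
      mul_le_mul (ha _) (pow_le_one₀ (norm_nonneg w) hw) (by positivity) (by positivity)
    _ ≤ (1/2 : ℝ) ^ p := by
        rw [mul_one]
        exact pow_le_pow_of_le_one (by norm_num) (by norm_num) (Nat.le_add_right p k)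
  have hg : Summable (fun p : ℕ => (1/2 : ℝ) ^ p) :=
    summable_geometric_of_lt_one (by norm_num) (by norm_num)
  have hs : ∀ k : ℕ, Summable (fun p => a (p + k) * w ^ p) := fun k =>
    Summable.of_norm_bounded hg (hb k)
  have hgs : HasSum (fun p : ℕ => (1/2 : ℝ) ^ p) 2 := by
    have := hasSum_geometric_of_lt_one (r := (1/2 : ℝ)) (by norm_num) (by norm_num)
    norm_num at this
    exact this
  refine ⟨∑' p, a (p + 2) * w ^ p, tsum_of_norm_bounded hgs (hb 2), ?_⟩
  have hs1 : Summable (fun p => a (p + 1) * w ^ (p + 1)) := by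
    apply Summable.of_norm_bounded hg
    intro p
    rw [norm_mul, norm_pow]
    calc ‖a (p + 1)‖ * ‖w‖ ^ (p+1) ≤ (1/2 : ℝ) ^ (p + 1) * 1 :=
      mul_le_mul (ha _) (pow_le_one₀ (norm_nonneg w) hw) (by positivity) (by positivity)
    _ ≤ (1/2 : ℝ) ^ p := by
        rw [mul_one]
        exact pow_le_pow_of_le_one (by norm_num) (by norm_num) (Nat.le_add_right p 1)
  have e1 : ∑' p, a p * w ^ p = a 0 + ∑' p, a (p + 1) * w ^ (p + 1) := by
    have := Summable.tsum_eq_zero_add (hs 0)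
    simpa using this
  have e2 : ∑' p, a (p + 1) * w ^ (p + 1) = w * ∑' p, a (p + 1) * w ^ p := by
    rw [← tsum_mul_left]
    exact tsum_congr fun p => by ring
  have e3 : ∑' p, a (p + 1) * w ^ p = a 1 + ∑' p, a (p + 2) * w ^ (p + 1) := by
    have := Summable.tsum_eq_zero_add (hs 1)
    simpa using this
  have e4 : ∑' p, a (p + 2) * w ^ (p + 1) = w * ∑' p, a (p + 2) * w ^ p := by
    rw [← tsum_mul_left]
    exact tsum_congr fun p => by ring
  rw [e1, e2, e3, e4]
  ring

lemma sum_boundX (a : ℕ → ℂ) (ha : ∀ p, ‖a p‖ ≤ (1/2 : ℝ) ^ p) (w : ℂ) (hw : ‖w‖ ≤ 1) :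
    ‖∑' p, a p * w ^ p‖ ≤ 2 := by
  have hgs : HasSum (fun p : ℕ => (1/2 : ℝ) ^ p) 2 := by
    have := hasSum_geometric_of_lt_one (r := (1/2 : ℝ)) (by norm_num) (by norm_num)
    norm_num at this
    exact this
  apply tsum_of_norm_bounded hgs
  intro p
  rw [norm_mul, norm_pow]
  calc ‖a p‖ * ‖w‖ ^ p ≤ (1/2 : ℝ) ^ p * 1 :=
    mul_le_mul (ha _) (pow_le_one₀ (norm_nonneg w) hw) (by positivity) (by positivity)
  _ = (1/2 : ℝ) ^ p := mul_one _

lemma jb_eqX (n : ℕ) (z : ℂ) : jb n z = z ^ n * FFX n (z ^ 2) := by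
  rw [jb, FFX, ← tsum_mul_left]
  apply tsum_congr
  intro p
  rw [faX, pow_add, pow_mul]
  ring

lemma yb_eqX (n : ℕ) (z : ℂ) (hz : z ≠ 0) :
    yb n z = -cBX n * ((z ^ (n + 1))⁻¹ * GGX n (z ^ 2)) := by
  rw [yb, cBX, GGX]
  congr 1
  rw [← tsum_mul_left]
  apply tsum_congr
  intro p
  rw [gaX]
  have hzp : z ^ (2 * (p : ℤ) - (n : ℤ) - 1) = (z ^ (n + 1))⁻¹ * (z ^ 2) ^ p := by
    have h1 : (2 * (p : ℤ) - (n : ℤ) - 1) = (-((n:ℤ) + 1)) + ((2 * p : ℕ) : ℤ) := by push_cast; ring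
    rw [h1, zpow_add₀ hz, zpow_natCast, zpow_neg]
    have h2 : ((n : ℤ) + 1) = ((n + 1 : ℕ) : ℤ) := by push_cast; ring
    rw [h2, zpow_natCast, pow_mul]
  rw [hzp]
  ring

lemma xiB_eqX (n : ℕ) (z : ℂ) (hz : z ≠ 0) :
    xiB n z = -Complex.I * z ^ (2 * n + 1) * (FFX n (z ^ 2)) ^ 2
        - cBX n * (FFX n (z ^ 2) * GGX n (z ^ 2)) := by
  rw [xiB, hb, jb_eqX, yb_eqX n z hz]
  have key : z * z ^ n * (z ^ (n + 1))⁻¹ = 1 := by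
    rw [← pow_succ']
    exact mul_inv_cancel₀ (pow_ne_zero _ hz)
  linear_combination (Complex.I ^ 2 * cBX n * FFX n (z ^ 2) * GGX n (z ^ 2)) * key +
    (cBX n * FFX n (z ^ 2) * GGX n (z ^ 2)) * Complex.I_sq
lemma Dfact (n : ℕ) :
    (2 : ℂ) ^ n * (Nat.factorial n : ℂ) * ∏ q ∈ Finset.range (n + 1), (2 * (q : ℂ) + 1)
      = ((2 * n + 1).factorial : ℂ) := by
  induction n with
  | zero => simp [Nat.factorial]
  | succ m ih =>
    rw [Finset.prod_range_succ]
    have h1 : (2 * (m + 1) + 1).factorial = (2 * m + 3) * ((2 * m + 2) * (2 * m + 1).factorial) := by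
      rw [show 2 * (m + 1) + 1 = (2 * m + 2) + 1 by ring, Nat.factorial_succ,
        show 2 * m + 2 = (2 * m + 1) + 1 by ring, Nat.factorial_succ]
    rw [h1, Nat.factorial_succ]
    push_cast
    linear_combination (2 * ((m : ℂ) + 1) * (2 * (m : ℂ) + 3)) * ih

lemma hcD (n : ℕ) :
    (2 * (n : ℂ) + 1) * cBX n = ∏ q ∈ Finset.range (n + 1), (2 * (q : ℂ) + 1) := by
  have hD := Dfact n
  have hfact : ((2 * n + 1).factorial : ℂ) = (2 * (n : ℂ) + 1) * ((2 * n).factorial : ℂ) := by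
    rw [Nat.factorial_succ]; push_cast; ring
  rw [cBX]
  have h2 : ((2 : ℂ) ^ n * (Nat.factorial n : ℂ)) ≠ 0 := by
    apply mul_ne_zero (pow_ne_zero _ two_ne_zero)
    exact_mod_cast (Nat.factorial_pos n).ne'
  rw [mul_div_assoc', div_eq_iff h2]
  linear_combination -hD - hfact

lemma faX0 (n : ℕ) : faX n 0 = 1 / ∏ q ∈ Finset.range (n + 1), (2 * (q : ℂ) + 1) := by
  simp [faX]

lemma faX1 (n : ℕ) :
    faX n 1 = -1 / (2 * ((∏ q ∈ Finset.range (n + 1), (2 * (q : ℂ) + 1)) * (2 * (n : ℂ) + 3))) := by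
  rw [faX]
  have h : n + 1 + 1 = (n + 1) + 1 := rfl
  rw [h, Finset.prod_range_succ]
  push_cast
  norm_num
  ring

lemma gaX0 (n : ℕ) : gaX n 0 = 1 := by simp [gaX]

lemma gaX1 (n : ℕ) : gaX n 1 = -1 / (2 * (-2 * (n : ℂ) + 1)) := by
  rw [gaX]
  norm_num
  ring

lemma two_n_one_ne (n : ℕ) : (2 * (n : ℂ) + 1) ≠ 0 := by
  have h : (2 * (n : ℂ) + 1) = ((2 * n + 1 : ℕ) : ℂ) := by push_cast; ring
  rw [h]
  exact Nat.cast_ne_zero.mpr (by omega)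

lemma two_n_three_ne (n : ℕ) : (2 * (n : ℂ) + 3) ≠ 0 := by
  have h : (2 * (n : ℂ) + 3) = ((2 * n + 3 : ℕ) : ℂ) := by push_cast; ring
  rw [h]
  exact Nat.cast_ne_zero.mpr (by omega)

lemma two_n_sub_one_ne (n : ℕ) (hn : 1 ≤ n) : (2 * (n : ℂ) - 1) ≠ 0 := by
  have key : (2 * n - 1 : ℕ) + 1 = 2 * n := by omega
  have h : (2 * (n : ℂ) - 1) = ((2 * n - 1 : ℕ) : ℂ) := by
    have := congrArg (fun m : ℕ => (m : ℂ)) key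
    push_cast at this
    linear_combination -this
  rw [h]
  exact Nat.cast_ne_zero.mpr (by omega)

lemma cBX_eq (n : ℕ) :
    cBX n = (∏ q ∈ Finset.range (n + 1), (2 * (q : ℂ) + 1)) / (2 * (n : ℂ) + 1) := by
  rw [eq_div_iff (two_n_one_ne n)]
  linear_combination hcD n

lemma coeff0 (n : ℕ) : cBX n * (faX n 0 * gaX n 0) = 1 / (2 * (n : ℂ) + 1) := by
  rw [faX0, gaX0, cBX_eq, mul_one]
  have hD := prodD_ne_zero (n + 1)
  have h1 := two_n_one_ne n
  field_simp

lemma coeff1 (n : ℕ) (hn : 1 ≤ n) :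
    cBX n * (faX n 0 * gaX n 1 + faX n 1 * gaX n 0)
      = 2 / ((2 * (n : ℂ) + 3) * (2 * (n : ℂ) + 1) * (2 * (n : ℂ) - 1)) := by
  rw [faX0, faX1, gaX0, gaX1, cBX_eq]
  have hD := prodD_ne_zero (n + 1)
  have h1 := two_n_one_ne n
  have h3 := two_n_three_ne n
  have hm := two_n_sub_one_ne n hn
  have hm' : (-2 * (n : ℂ) + 1) ≠ 0 := by
    intro h; apply hm; linear_combination -h
  have hm2 : (-(2 * (n : ℂ)) + 1) ≠ 0 := by
    intro h; apply hm; linear_combination -h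
  field_simp
  ring

/-- Asymptotic expansion of ξₙ (n ≥ 1) near the origin:
ξₙ(z) = −1/(2n+1) − 2z²/((2n+3)(2n+1)(2n−1)) + O(z³). -/
theorem xin_asymptotic (n : ℕ) (hn : 1 ≤ n) :
    ∃ δ > (0 : ℝ), ∃ C > (0 : ℝ), ∀ z : ℂ, 0 < ‖z‖ → ‖z‖ < δ →
      ‖xiB n z - (-(1 / (2 * (n : ℂ) + 1)) -
          2 * z ^ 2 / ((2 * (n : ℂ) + 3) * (2 * (n : ℂ) + 1) * (2 * (n : ℂ) - 1)))‖
        ≤ C * ‖z‖ ^ 3 := by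
  refine ⟨1, one_pos, 4 + 8 * (‖cBX n‖ + 1), by positivity, ?_⟩
  intro z hz0 hz1
  have hz : z ≠ 0 := by
    intro h
    rw [h] at hz0
    simp at hz0
  have hzle : ‖z‖ ≤ 1 := le_of_lt hz1
  have hw : ‖z ^ 2‖ ≤ 1 := by
    rw [norm_pow]
    exact pow_le_one₀ (norm_nonneg z) hzle
  obtain ⟨RF, hRF, eF0⟩ := tail2X (faX n) (norm_faX n) (z ^ 2) hw
  obtain ⟨RG, hRG, eG0⟩ := tail2X (gaX n) (norm_gaX n) (z ^ 2) hw
  have eF : FFX n (z ^ 2) = faX n 0 + faX n 1 * z ^ 2 + (z ^ 2) ^ 2 * RF := eF0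
  have eG : GGX n (z ^ 2) = gaX n 0 + gaX n 1 * z ^ 2 + (z ^ 2) ^ 2 * RG := eG0
  have hFb : ‖FFX n (z ^ 2)‖ ≤ 2 := sum_boundX (faX n) (norm_faX n) (z ^ 2) hw
  have hc0 := coeff0 n
  have hc1 := coeff1 n hn
  have hE : xiB n z - (-(1 / (2 * (n : ℂ) + 1)) -
        2 * z ^ 2 / ((2 * (n : ℂ) + 3) * (2 * (n : ℂ) + 1) * (2 * (n : ℂ) - 1)))
      = -Complex.I * z ^ (2 * n + 1) * (FFX n (z ^ 2)) ^ 2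
        - cBX n * (z ^ 2) ^ 2 * (faX n 1 * gaX n 1 + FFX n (z ^ 2) * RG
            + RF * (gaX n 0 + gaX n 1 * z ^ 2)) := by
    rw [xiB_eqX n z hz]
    linear_combination (-(cBX n) * FFX n (z ^ 2)) * eG
      + (-(cBX n) * (gaX n 0 + gaX n 1 * z ^ 2)) * eF - hc0 - z ^ 2 * hc1
  rw [hE]
  have hg1 : ‖gaX n 1‖ ≤ 1 / 2 := by
    have := norm_gaX n 1
    norm_num at this
    exact this
  have hf1 : ‖faX n 1‖ ≤ 1 / 2 := by
    have := norm_faX n 1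
    norm_num at this
    exact this
  have hg0 : ‖gaX n 0‖ ≤ 1 := by
    have := norm_gaX n 0
    norm_num at this
    exact this
  have hQb : ‖faX n 1 * gaX n 1 + FFX n (z ^ 2) * RG + RF * (gaX n 0 + gaX n 1 * z ^ 2)‖ ≤ 8 := by
    have t1 : ‖faX n 1 * gaX n 1‖ ≤ 1 / 2 * (1 / 2) := by
      rw [norm_mul]
      exact mul_le_mul hf1 hg1 (norm_nonneg _) (by norm_num)
    have t2 : ‖FFX n (z ^ 2) * RG‖ ≤ 2 * 2 := by
      rw [norm_mul]
      exact mul_le_mul hFb hRG (norm_nonneg _) (by norm_num)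
    have t3 : ‖RF * (gaX n 0 + gaX n 1 * z ^ 2)‖ ≤ 2 * (1 + 1 / 2 * 1) := by
      rw [norm_mul]
      apply mul_le_mul hRF _ (norm_nonneg _) (by norm_num)
      calc ‖gaX n 0 + gaX n 1 * z ^ 2‖ ≤ ‖gaX n 0‖ + ‖gaX n 1‖ * ‖z ^ 2‖ := by
            rw [← norm_mul]; exact norm_add_le _ _
      _ ≤ 1 + 1 / 2 * 1 :=
            add_le_add hg0 (mul_le_mul hg1 hw (norm_nonneg _) (by norm_num))
    calc ‖_ + _ + _‖ ≤ ‖faX n 1 * gaX n 1‖ + ‖FFX n (z ^ 2) * RG‖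
          + ‖RF * (gaX n 0 + gaX n 1 * z ^ 2)‖ := norm_add₃_le
    _ ≤ 1 / 2 * (1 / 2) + 2 * 2 + 2 * (1 + 1 / 2 * 1) := by
          exact add_le_add (add_le_add t1 t2) t3
    _ ≤ 8 := by norm_num
  have h2n : ‖z‖ ^ (2 * n + 1) ≤ ‖z‖ ^ 3 :=
    pow_le_pow_of_le_one (norm_nonneg z) hzle (by omega)
  have hz4 : ‖z‖ ^ 4 ≤ ‖z‖ ^ 3 :=
    pow_le_pow_of_le_one (norm_nonneg z) hzle (by omega)
  have hF2 : ‖FFX n (z ^ 2)‖ ^ 2 ≤ 4 := by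
    calc ‖FFX n (z ^ 2)‖ ^ 2 ≤ 2 ^ 2 := pow_le_pow_left₀ (norm_nonneg _) hFb 2
    _ = 4 := by norm_num
  calc ‖-Complex.I * z ^ (2 * n + 1) * (FFX n (z ^ 2)) ^ 2
        - cBX n * (z ^ 2) ^ 2 * (faX n 1 * gaX n 1 + FFX n (z ^ 2) * RG
            + RF * (gaX n 0 + gaX n 1 * z ^ 2))‖
      ≤ ‖-Complex.I * z ^ (2 * n + 1) * (FFX n (z ^ 2)) ^ 2‖
        + ‖cBX n * (z ^ 2) ^ 2 * (faX n 1 * gaX n 1 + FFX n (z ^ 2) * RG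
            + RF * (gaX n 0 + gaX n 1 * z ^ 2))‖ := norm_sub_le _ _
  _ = ‖z‖ ^ (2 * n + 1) * ‖FFX n (z ^ 2)‖ ^ 2
        + ‖cBX n‖ * (‖z‖ ^ 4 * ‖faX n 1 * gaX n 1 + FFX n (z ^ 2) * RG
            + RF * (gaX n 0 + gaX n 1 * z ^ 2)‖) := by
      rw [norm_mul, norm_mul, norm_mul, norm_mul, norm_neg, Complex.norm_I, one_mul,
        norm_pow, norm_pow, norm_pow, norm_pow]
      ring
  _ ≤ ‖z‖ ^ 3 * 4 + ‖cBX n‖ * (‖z‖ ^ 3 * 8) := by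
      apply add_le_add
      · exact mul_le_mul h2n hF2 (by positivity) (by positivity)
      · apply mul_le_mul_of_nonneg_left _ (norm_nonneg _)
        exact mul_le_mul hz4 hQb (norm_nonneg _) (by positivity)
  _ ≤ (4 + 8 * (‖cBX n‖ + 1)) * ‖z‖ ^ 3 := by
      nlinarith [norm_nonneg (cBX n), pow_nonneg (norm_nonneg z) 3]
end

section
/- There exist δ > 0 and C > 0 such that for every real k with 0 < k < δ one has |η₀(k) − (−1/(3(λ+2μ)) − 2·k_p²/(15(λ+2μ)))| ≤ C·k³. -/
open Complex

/-- Pressure wavenumber k_p = k/√(λ+2μ), as a complex number. -/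
noncomputable def kpC (lam mu k : ℝ) : ℂ := ((k / Real.sqrt (lam + 2 * mu) : ℝ) : ℂ)

/-- η₀(k) = −i k_p j₁(k_p) h₁(k_p)/(λ+2μ). -/
noncomputable def eta0 (lam mu : ℝ) (k : ℝ) : ℂ :=
  -Complex.I * kpC lam mu k * jb 1 (kpC lam mu k) * hb 1 (kpC lam mu k) /
    ((lam : ℂ) + 2 * (mu : ℂ))

/-- Even part of z⁻¹ j₁(z). -/
noncomputable def SjF (z : ℂ) : ℂ :=
  ∑' p : ℕ, ((-1 : ℂ) ^ p * z ^ (2 * p)) /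
    ((2 : ℂ) ^ p * (Nat.factorial p : ℂ) * ∏ q ∈ Finset.range (p + 2), (2 * (q : ℂ) + 1))

/-- Even part of −z² y₁(z). -/
noncomputable def TfF (z : ℂ) : ℂ :=
  ∑' p : ℕ, ((-1 : ℂ) ^ p * z ^ (2 * p)) /
    ((2 : ℂ) ^ p * (Nat.factorial p : ℂ) *
      ∏ q ∈ Finset.Icc 1 p, (2 * (q : ℂ) - 3))

lemma norm_termS (x : ℝ) (hx : 0 ≤ x) (p : ℕ) :
    ‖((-1 : ℂ) ^ p * (x:ℂ) ^ (2 * p)) /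
      ((2 : ℂ) ^ p * (Nat.factorial p : ℂ) * ∏ q ∈ Finset.range (p + 2), (2 * (q : ℂ) + 1))‖
      ≤ x ^ (2 * p) / 2 ^ p := by
  have hcast : ((-1 : ℂ) ^ p * (x:ℂ) ^ (2 * p)) /
      ((2 : ℂ) ^ p * (Nat.factorial p : ℂ) * ∏ q ∈ Finset.range (p + 2), (2 * (q : ℂ) + 1))
      = ((((-1 : ℝ) ^ p * x ^ (2 * p)) /
      ((2 : ℝ) ^ p * (Nat.factorial p : ℝ) * ∏ q ∈ Finset.range (p + 2), (2 * (q : ℝ) + 1)) : ℝ) : ℂ) := by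
    push_cast
    ring
  have hP : (1:ℝ) ≤ ∏ q ∈ Finset.range (p + 2), (2 * (q : ℝ) + 1) := by
    calc (1:ℝ) = ∏ _q ∈ Finset.range (p+2), (1:ℝ) := by simp
    _ ≤ _ := Finset.prod_le_prod (by intros; norm_num)
      (fun i _ => by have : (0:ℝ) ≤ (i:ℝ) := i.cast_nonneg; linarith)
  have hfac : (1:ℝ) ≤ (Nat.factorial p : ℝ) := by exact_mod_cast p.factorial_pos
  have h2p : (0:ℝ) < 2 ^ p := by positivity
  have hfP : (1:ℝ) ≤ (Nat.factorial p : ℝ) * ∏ q ∈ Finset.range (p + 2), (2 * (q : ℝ) + 1) := by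
    calc (1:ℝ) = 1 * 1 := by norm_num
    _ ≤ _ := mul_le_mul hfac hP zero_le_one (zero_le_one.trans hfac)
  have hDpos : (0:ℝ) < (2 : ℝ) ^ p * (Nat.factorial p : ℝ) *
      ∏ q ∈ Finset.range (p + 2), (2 * (q : ℝ) + 1) := by nlinarith
  rw [hcast, Complex.norm_real, Real.norm_eq_abs, abs_div, abs_mul, _root_.abs_pow,
    _root_.abs_pow, abs_neg, abs_one, one_pow, one_mul, _root_.abs_of_nonneg hx,
    _root_.abs_of_pos hDpos, div_le_div_iff₀ hDpos h2p]
  have hden : (2:ℝ)^p ≤ (2 : ℝ) ^ p * (Nat.factorial p : ℝ) *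
      ∏ q ∈ Finset.range (p + 2), (2 * (q : ℝ) + 1) := by nlinarith [mul_le_mul_of_nonneg_left hfP h2p.le]
  exact mul_le_mul_of_nonneg_left hden (pow_nonneg hx _)

lemma norm_termT (x : ℝ) (hx : 0 ≤ x) (p : ℕ) :
    ‖((-1 : ℂ) ^ p * (x:ℂ) ^ (2 * p)) /
      ((2 : ℂ) ^ p * (Nat.factorial p : ℂ) * ∏ q ∈ Finset.Icc 1 p, (2 * (q : ℂ) - 3))‖
      ≤ x ^ (2 * p) / 2 ^ p := by
  have hcast : ((-1 : ℂ) ^ p * (x:ℂ) ^ (2 * p)) /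
      ((2 : ℂ) ^ p * (Nat.factorial p : ℂ) * ∏ q ∈ Finset.Icc 1 p, (2 * (q : ℂ) - 3))
      = ((((-1 : ℝ) ^ p * x ^ (2 * p)) /
      ((2 : ℝ) ^ p * (Nat.factorial p : ℝ) * ∏ q ∈ Finset.Icc 1 p, (2 * (q : ℝ) - 3)) : ℝ) : ℂ) := by
    push_cast
    ring
  have hfact : ∀ q ∈ Finset.Icc 1 p, (1:ℝ) ≤ |2 * (q:ℝ) - 3| := by
    intro q hq
    have hq1 : 1 ≤ q := (Finset.mem_Icc.mp hq).1
    rcases Nat.lt_or_ge q 2 with h | h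
    · interval_cases q <;> norm_num
    · rw [le_abs]
      left
      have : (2:ℝ) ≤ (q:ℝ) := by exact_mod_cast h
      linarith
  have hP : (1:ℝ) ≤ ∏ q ∈ Finset.Icc 1 p, |2 * (q:ℝ) - 3| := by
    calc (1:ℝ) = ∏ _q ∈ Finset.Icc 1 p, (1:ℝ) := by simp
    _ ≤ _ := Finset.prod_le_prod (by intros; norm_num) hfact
  have hfac : (1:ℝ) ≤ (Nat.factorial p : ℝ) := by exact_mod_cast p.factorial_pos
  have h2p : (0:ℝ) < 2 ^ p := by positivity
  have hfP : (1:ℝ) ≤ (Nat.factorial p : ℝ) * ∏ q ∈ Finset.Icc 1 p, |2 * (q:ℝ) - 3| := by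
    calc (1:ℝ) = 1 * 1 := by norm_num
    _ ≤ _ := mul_le_mul hfac hP zero_le_one (zero_le_one.trans hfac)
  have hDpos : (0:ℝ) < (2 : ℝ) ^ p * (Nat.factorial p : ℝ) *
      ∏ q ∈ Finset.Icc 1 p, |2 * (q:ℝ) - 3| := by nlinarith
  rw [hcast, Complex.norm_real, Real.norm_eq_abs, abs_div, abs_mul, _root_.abs_pow,
    _root_.abs_pow, abs_neg, abs_one, one_pow, one_mul, _root_.abs_of_nonneg hx,
    abs_mul, abs_mul, Finset.abs_prod, _root_.abs_pow,
    _root_.abs_of_pos (by norm_num : (0:ℝ) < (2:ℝ)),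
    _root_.abs_of_pos (by exact_mod_cast p.factorial_pos : (0:ℝ) < (Nat.factorial p : ℝ)),
    div_le_div_iff₀ hDpos h2p]
  have hden : (2:ℝ)^p ≤ (2 : ℝ) ^ p * (Nat.factorial p : ℝ) *
      ∏ q ∈ Finset.Icc 1 p, |2 * (q:ℝ) - 3| := by nlinarith [mul_le_mul_of_nonneg_left hfP h2p.le]
  exact mul_le_mul_of_nonneg_left hden (pow_nonneg hx _)

/-- Generic tail estimate. -/
lemma series_est (a : ℕ → ℂ) (x : ℝ) (hx0 : 0 ≤ x) (hx1 : x ≤ 1)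
    (hb : ∀ p, ‖a p‖ ≤ x ^ (2 * p) / 2 ^ p) :
    Summable a ∧ ‖∑' p : ℕ, a (p + 2)‖ ≤ x ^ 4 := by
  have hgeo : Summable (fun p : ℕ => (1/2 : ℝ) ^ p) :=
    summable_geometric_of_lt_one (by norm_num) (by norm_num)
  have hbd : ∀ p, ‖a p‖ ≤ (1/2 : ℝ) ^ p := by
    intro p
    refine (hb p).trans ?_
    rw [div_pow, one_pow]
    gcongr
    exact pow_le_one₀ hx0 hx1
  have hsum : Summable a := Summable.of_norm_bounded hgeo hbd
  refine ⟨hsum, ?_⟩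
  have h1 : ∀ p : ℕ, ‖a (p + 2)‖ ≤ x ^ 4 * ((1/2 : ℝ) ^ p * (1/4)) := by
    intro p
    refine (hb (p + 2)).trans ?_
    have e1 : x ^ (2 * (p + 2)) = x ^ (2*p) * x ^ 4 := by ring
    have e2 : (2:ℝ) ^ (p + 2) = 2 ^ p * 4 := by ring
    rw [e1, e2]
    have hxp : x ^ (2*p) ≤ 1 := pow_le_one₀ hx0 hx1
    have h2p : (0:ℝ) < 2 ^ p := by positivity
    rw [div_le_iff₀ (by positivity)]
    have hx4 : (0:ℝ) ≤ x ^ 4 := by positivity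
    have hhalf : (1/2:ℝ)^p * 2^p = 1 := by
      rw [one_div, inv_pow, inv_mul_cancel₀ (ne_of_gt h2p)]
    have heq : x ^ 4 * ((1/2:ℝ)^p * (1/4)) * (2^p * 4) = x ^ 4 := by
      linear_combination x ^ 4 * hhalf
    rw [heq]
    nlinarith
  have hgeo2 : Summable (fun p : ℕ => x ^ 4 * ((1/2 : ℝ) ^ p * (1/4))) :=
    ((hgeo.mul_right (1/4)).mul_left (x ^ 4))
  have hsn : Summable (fun p : ℕ => ‖a (p + 2)‖) :=
    Summable.of_nonneg_of_le (fun p => norm_nonneg _) h1 hgeo2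
  calc ‖∑' p : ℕ, a (p + 2)‖ ≤ ∑' p : ℕ, ‖a (p + 2)‖ := norm_tsum_le_tsum_norm hsn
  _ ≤ ∑' p : ℕ, x ^ 4 * ((1/2 : ℝ) ^ p * (1/4)) := Summable.tsum_le_tsum h1 hsn hgeo2
  _ = x ^ 4 * ((1 - 1/2)⁻¹ * (1/4)) := by
      rw [tsum_mul_left, tsum_mul_right, tsum_geometric_of_lt_one (by norm_num) (by norm_num)]
  _ ≤ x ^ 4 := by nlinarith [pow_nonneg hx0 4]

lemma jb_one (z : ℂ) : jb 1 z = z * SjF z := by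
  unfold jb SjF
  rw [← tsum_mul_left]
  congr 1
  funext p
  rw [show 1 + p + 1 = p + 2 by omega]
  ring

lemma yb_one (z : ℂ) (hz : z ≠ 0) : yb 1 z = -(z ^ (-2 : ℤ) * TfF z) := by
  unfold yb TfF
  have hcoef2 : ((Nat.factorial (2 * 1) : ℂ) / ((2 : ℂ) ^ 1 * (Nat.factorial 1 : ℂ))) = 1 := by
    norm_num [Nat.factorial]
  rw [hcoef2, neg_mul, one_mul, neg_inj, ← tsum_mul_left]
  congr 1
  funext p
  have hprod : ∏ q ∈ Finset.Icc 1 p, (-2 * ((1:ℕ) : ℂ) + 2 * (q : ℂ) - 1)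
      = ∏ q ∈ Finset.Icc 1 p, (2 * (q : ℂ) - 3) :=
    Finset.prod_congr rfl (fun q _ => by push_cast; ring)
  rw [hprod]
  have he : (2 * (p : ℤ) - ((1:ℕ) : ℤ) - 1) = ((2 * p : ℕ) : ℤ) + (-2) := by push_cast; ring
  rw [he, zpow_add₀ hz, zpow_natCast]
  ring

lemma SjF_expand (x : ℝ) (hx0 : 0 ≤ x) (hx1 : x ≤ 1) :
    ∃ E : ℂ, SjF (x:ℂ) = 1/3 - (x:ℂ)^2/30 + E ∧ ‖E‖ ≤ x^4 := by
  obtain ⟨hsum, htail⟩ := series_est (fun p : ℕ => ((-1 : ℂ) ^ p * (x:ℂ) ^ (2 * p)) /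
    ((2 : ℂ) ^ p * (Nat.factorial p : ℂ) * ∏ q ∈ Finset.range (p + 2), (2 * (q : ℂ) + 1)))
    x hx0 hx1 (norm_termS x hx0)
  refine ⟨_, ?_, htail⟩
  unfold SjF
  rw [← hsum.sum_add_tsum_nat_add 2]
  congr 1
  rw [Finset.sum_range_succ, Finset.sum_range_one]
  norm_num [Finset.prod_range_succ, Nat.factorial]
  ring

lemma TfF_expand (x : ℝ) (hx0 : 0 ≤ x) (hx1 : x ≤ 1) :
    ∃ E : ℂ, TfF (x:ℂ) = 1 + (x:ℂ)^2/2 + E ∧ ‖E‖ ≤ x^4 := by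
  obtain ⟨hsum, htail⟩ := series_est (fun p : ℕ => ((-1 : ℂ) ^ p * (x:ℂ) ^ (2 * p)) /
    ((2 : ℂ) ^ p * (Nat.factorial p : ℂ) * ∏ q ∈ Finset.Icc 1 p, (2 * (q : ℂ) - 3)))
    x hx0 hx1 (norm_termT x hx0)
  refine ⟨_, ?_, htail⟩
  unfold TfF
  rw [← hsum.sum_add_tsum_nat_add 2]
  congr 1
  rw [Finset.sum_range_succ, Finset.sum_range_one]
  norm_num [Finset.Icc_self, Nat.factorial]

set_option maxHeartbeats 2000000 in
/-- Asymptotic expansion of η₀(k):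
η₀(k) = −1/(3(λ+2μ)) − 2k_p²/(15(λ+2μ)) + O(k³). -/
theorem eta0_asymptotic (lam mu : ℝ) (hmu : 0 < mu) (hlm : 0 < 3 * lam + 2 * mu) :
    ∃ δ > (0 : ℝ), ∃ C > (0 : ℝ), ∀ k : ℝ, 0 < k → k < δ →
      ‖eta0 lam mu k - (-(1 / (3 * ((lam : ℂ) + 2 * (mu : ℂ)))) -
          2 * (kpC lam mu k) ^ 2 / (15 * ((lam : ℂ) + 2 * (mu : ℂ))))‖
        ≤ C * k ^ 3 := by
  have hL : (0:ℝ) < lam + 2 * mu := by linarith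
  set L : ℝ := lam + 2 * mu with hLdef
  set s : ℝ := Real.sqrt L with hsdef
  have hs : 0 < s := Real.sqrt_pos.mpr hL
  have hs2 : s ^ 2 = L := Real.sq_sqrt hL.le
  refine ⟨s, hs, 7 / (L ^ 2 * s), by positivity, ?_⟩
  intro k hk hks
  set x : ℝ := k / s with hxdef
  have hx0 : 0 ≤ x := by positivity
  have hxpos : 0 < x := by positivity
  have hx1 : x ≤ 1 := le_of_lt ((div_lt_one hs).mpr hks)
  have hkp : kpC lam mu k = ((x:ℝ):ℂ) := rfl
  have hz : ((x:ℝ):ℂ) ≠ 0 := Complex.ofReal_ne_zero.mpr (ne_of_gt hxpos)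
  set z : ℂ := ((x:ℝ):ℂ) with hzdef
  obtain ⟨E₁, hSE, hE1⟩ := SjF_expand x hx0 hx1
  obtain ⟨E₂, hTE, hE2⟩ := TfF_expand x hx0 hx1
  set S : ℂ := SjF z with hSdef
  set T : ℂ := TfF z with hTdef
  have hnz : ‖z‖ = x := by
    rw [hzdef, Complex.norm_real, Real.norm_eq_abs, _root_.abs_of_nonneg hx0]
  have hzinv : z ^ (-2 : ℤ) = (z ^ 2)⁻¹ := by
    rw [show (-2:ℤ) = -(2:ℤ) from rfl, zpow_neg, zpow_two, sq]
  have hkey : -Complex.I * z * jb 1 z * hb 1 z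
      = -Complex.I * z ^ 3 * S ^ 2 - S * T := by
    rw [hb, jb_one, yb_one z hz, hzinv, ← hSdef, ← hTdef]
    field_simp
    linear_combination S * T * Complex.I_sq
  set Lc : ℂ := (lam:ℂ) + 2 * (mu:ℂ) with hLcdef
  have hLc : Lc = ((L:ℝ):ℂ) := by rw [hLcdef, hLdef]; push_cast; ring
  have hLcne : Lc ≠ 0 := by
    rw [hLc]; exact Complex.ofReal_ne_zero.mpr (ne_of_gt hL)
  have herr : eta0 lam mu k - (-(1 / (3 * Lc)) - 2 * (kpC lam mu k) ^ 2 / (15 * Lc))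
      = ((-Complex.I * z ^ 3 * S ^ 2 - S * T) - (-(1:ℂ)/3 - 2 * z ^ 2 / 15)) / Lc := by
    rw [eta0, hkp, hkey, ← hLcdef]
    field_simp
  rw [herr, norm_div]
  have hnLc : ‖Lc‖ = L := by
    rw [hLc, Complex.norm_real, Real.norm_eq_abs, _root_.abs_of_pos hL]
  rw [hnLc]
  -- bound the numerator
  have herr2 : (-Complex.I * z ^ 3 * S ^ 2 - S * T) - (-(1:ℂ)/3 - 2 * z ^ 2 / 15)
      = -Complex.I * z ^ 3 * S ^ 2 - (E₂/3 - z^4/60 - z^2*E₂/30 + E₁*T) := by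
    rw [hSE, hTE]
    ring
  have hx43 : x ^ 4 ≤ x ^ 3 := pow_le_pow_of_le_one hx0 hx1 (by norm_num)
  have hx21 : x ^ 2 ≤ 1 := pow_le_one₀ hx0 hx1
  have hx41 : x ^ 4 ≤ 1 := pow_le_one₀ hx0 hx1
  have hSb : ‖S‖ ≤ 2 := by
    rw [hSE]
    calc ‖1/3 - z^2/30 + E₁‖ ≤ ‖(1:ℂ)/3 - z^2/30‖ + ‖E₁‖ := norm_add_le _ _
    _ ≤ (‖(1:ℂ)/3‖ + ‖z^2/30‖) + ‖E₁‖ := by gcongr; exact norm_sub_le _ _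
    _ ≤ (1/3 + x^2/30) + x^4 := by
        gcongr
        · simp
        · rw [norm_div, norm_pow, hnz]; norm_num
    _ ≤ 2 := by nlinarith
  have hTb : ‖T‖ ≤ 5/2 := by
    rw [hTE]
    calc ‖1 + z^2/2 + E₂‖ ≤ ‖(1:ℂ) + z^2/2‖ + ‖E₂‖ := norm_add_le _ _
    _ ≤ (‖(1:ℂ)‖ + ‖z^2/2‖) + ‖E₂‖ := by gcongr; exact norm_add_le _ _
    _ ≤ (1 + x^2/2) + x^4 := by
        gcongr
        · simp
        · rw [norm_div, norm_pow, hnz]; norm_num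
    _ ≤ 5/2 := by nlinarith
  have hA : ‖-Complex.I * z ^ 3 * S ^ 2‖ ≤ 4 * x ^ 3 := by
    rw [norm_mul, norm_mul, norm_neg, Complex.norm_I, one_mul, norm_pow, norm_pow, hnz]
    have h1 : ‖S‖ ^ 2 ≤ 4 := by nlinarith [norm_nonneg S]
    nlinarith [pow_nonneg hx0 3]
  have hB : ‖E₂/3 - z^4/60 - z^2*E₂/30 + E₁*T‖ ≤ 3 * x ^ 3 := by
    have n1 : ‖E₂/(3:ℂ)‖ ≤ x^4/3 := by
      rw [norm_div, (by norm_num : ‖(3:ℂ)‖ = (3:ℝ))]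
      gcongr
    have n2 : ‖z^4/(60:ℂ)‖ ≤ x^4/60 := by
      rw [norm_div, norm_pow, hnz]; norm_num
    have n3 : ‖z^2*E₂/(30:ℂ)‖ ≤ x^4/30 := by
      rw [norm_div, norm_mul, norm_pow, hnz]
      have : x^2 * ‖E₂‖ ≤ 1 * x^4 := by
        apply mul_le_mul hx21 hE2 (norm_nonneg _) zero_le_one
      have h30 : ‖(30:ℂ)‖ = 30 := by norm_num
      rw [h30]
      nlinarith
    have n4 : ‖E₁*T‖ ≤ x^4*(5/2) := by
      rw [norm_mul]
      exact mul_le_mul hE1 hTb (norm_nonneg _) (by positivity)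
    calc ‖E₂/3 - z^4/60 - z^2*E₂/30 + E₁*T‖
        ≤ ‖E₂/3 - z^4/60 - z^2*E₂/30‖ + ‖E₁*T‖ := norm_add_le _ _
    _ ≤ (‖E₂/3 - z^4/60‖ + ‖z^2*E₂/30‖) + ‖E₁*T‖ := by gcongr; exact norm_sub_le _ _
    _ ≤ ((‖E₂/3‖ + ‖z^4/60‖) + ‖z^2*E₂/30‖) + ‖E₁*T‖ := by gcongr; exact norm_sub_le _ _
    _ ≤ ((x^4/3 + x^4/60) + x^4/30) + x^4*(5/2) := by gcongr
    _ ≤ 3 * x ^ 3 := by nlinarith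
  have hnum : ‖(-Complex.I * z ^ 3 * S ^ 2 - S * T) - (-(1:ℂ)/3 - 2 * z ^ 2 / 15)‖
      ≤ 7 * x ^ 3 := by
    rw [herr2]
    calc ‖-Complex.I * z ^ 3 * S ^ 2 - (E₂/3 - z^4/60 - z^2*E₂/30 + E₁*T)‖
        ≤ ‖-Complex.I * z ^ 3 * S ^ 2‖ + ‖E₂/3 - z^4/60 - z^2*E₂/30 + E₁*T‖ := norm_sub_le _ _
    _ ≤ 4 * x ^ 3 + 3 * x ^ 3 := add_le_add hA hB
    _ = 7 * x ^ 3 := by ring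
  calc ‖(-Complex.I * z ^ 3 * S ^ 2 - S * T) - (-(1:ℂ)/3 - 2 * z ^ 2 / 15)‖ / L
      ≤ (7 * x ^ 3) / L := by gcongr
  _ = 7 / (L ^ 2 * s) * k ^ 3 := by
      have hs3 : s ^ 3 = s * L := by nlinarith [hs2]
      rw [hxdef, div_pow, hs3]
      field_simp
end

section
/- There exist r > 0 and C > 0 such that for every real k with 0 < k < r one has ξ₀(k·s) ≠ 0 and |λ₀(k) − k²·( −4μc/(9(λ+2μ)) − δτ²/(3(λ+2μ)) )| ≤ C·k³, where λ₀(k) = (−1/2 + ζ₀(k·s)) · ξ₀(k·s)^{−1} · ρ₀(k·τ) + δ·τ²·k²·η₀(k·τ). -/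
open Complex

/-- ρ₀(k) = i(4μ k_p j₁(k_p)h₁(k_p)/(λ+2μ) − k_p² j₁(k_p)h₀(k_p)). -/
noncomputable def rho0 (lam mu : ℝ) (k : ℝ) : ℂ :=
  Complex.I * (4 * (mu : ℂ) * kpC lam mu k * jb 1 (kpC lam mu k) * hb 1 (kpC lam mu k) /
      ((lam : ℂ) + 2 * (mu : ℂ)) -
    (kpC lam mu k) ^ 2 * jb 1 (kpC lam mu k) * hb 0 (kpC lam mu k))


section AuxLemmas
open Finset

lemma nat_id1 (p : ℕ) :
    2 ^ p * p.factorial * ∏ q ∈ range (p + 1), (2 * q + 1) = (2 * p + 1).factorial := by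
  induction p with
  | zero => simp
  | succ n ih =>
    rw [Finset.prod_range_succ]
    have h2 : 2 * (n + 1) + 1 = (2 * n + 1) + 2 := by ring
    rw [h2, Nat.factorial_succ, Nat.factorial_succ, pow_succ, Nat.factorial_succ]
    have h4 : 2 ^ n * 2 * ((n + 1) * n.factorial) *
        ((∏ x ∈ range (n + 1), (2 * x + 1)) * (2 * n + 1 + 2)) =
        ((2*n+1+2) * (2*n+2)) * (2 ^ n * n.factorial * ∏ x ∈ range (n + 1), (2 * x + 1)) := by
      ring
    rw [h4, ih]; ring

lemma nat_id3 (p : ℕ) :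
    2 ^ p * p.factorial * ∏ q ∈ Icc 1 p, (2 * q - 1) = (2 * p).factorial := by
  induction p with
  | zero => simp
  | succ n ih =>
    rw [Finset.prod_Icc_succ_top (by omega : 1 ≤ n + 1)]
    have h2 : 2 * (n + 1) = (2 * n) + 2 := by ring
    rw [h2, Nat.factorial_succ, Nat.factorial_succ, pow_succ, Nat.factorial_succ]
    have h3 : 2 * n + 2 - 1 = 2*n + 1 := by omega
    rw [h3]
    have h4 : 2 ^ n * 2 * ((n + 1) * n.factorial) * ((∏ k ∈ Icc 1 n, (2 * k - 1)) * (2*n + 1)) =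
        ((2*n+2) * (2*n+1)) * (2 ^ n * n.factorial * ∏ k ∈ Icc 1 n, (2 * k - 1)) := by
      ring
    rw [h4, ih]; ring

lemma c_id1 (p : ℕ) : (2:ℂ)^p * (p.factorial : ℂ) * ∏ q ∈ range (p+1), (2*(q:ℂ)+1)
    = ((2*p+1).factorial : ℂ) := by
  rw [← nat_id1 p]; push_cast; ring

lemma c_id2 (p : ℕ) : (2:ℂ)^p * (p.factorial : ℂ) * ∏ q ∈ range (p+2), (2*(q:ℂ)+1)
    = ((2*p+1).factorial : ℂ) * (2*(p:ℂ)+3) := by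
  have : p + 2 = (p+1) + 1 := rfl
  rw [this, Finset.prod_range_succ, ← mul_assoc, c_id1]
  push_cast; ring

lemma c_id3 (p : ℕ) : (2:ℂ)^p * (p.factorial : ℂ) * ∏ q ∈ Icc 1 p, (2*(q:ℂ)-1)
    = (((2*p).factorial : ℕ) : ℂ) := by
  have hprod : ∏ q ∈ Icc 1 p, (2*(q:ℂ)-1) = ((∏ q ∈ Icc 1 p, (2*q-1) : ℕ) : ℂ) := by
    rw [Nat.cast_prod]
    apply Finset.prod_congr rfl
    intro q hq
    have h1 : 1 ≤ q := (Finset.mem_Icc.mp hq).1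
    rw [Nat.cast_sub (by omega : 1 ≤ 2*q)]
    push_cast
    ring
  rw [hprod, ← nat_id3 p]; push_cast; ring

lemma c_id4 : ∀ p : ℕ, 1 ≤ p →
    (2*(p:ℂ)-1) * ((2:ℂ)^p * (p.factorial:ℂ) * ∏ q ∈ Icc 1 p, (2*(q:ℂ)-3))
      = -(((2*p).factorial : ℕ) : ℂ) := by
  intro p
  induction p with
  | zero => omega
  | succ n ih =>
    intro _
    rcases Nat.eq_or_lt_of_le (Nat.one_le_iff_ne_zero.mpr (Nat.succ_ne_zero n)) with h | h
    · have hn : n = 0 := by omega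
      subst hn
      norm_num [Finset.Icc_self]
    · have hn : 1 ≤ n := by omega
      rw [Finset.prod_Icc_succ_top (by omega : 1 ≤ n + 1)]
      have hfac : (2*(n+1)).factorial = (2*n+2)*((2*n+1)*(2*n).factorial) := by
        have : 2*(n+1) = (2*n+1)+1 := by ring
        rw [this, Nat.factorial_succ, Nat.factorial_succ]
      rw [hfac]
      have key := ih hn
      have expand : (2*((n:ℂ)+1)-1) * ((2:ℂ)^(n+1) * ((n+1).factorial:ℂ) *
          ((∏ q ∈ Icc 1 n, (2*(q:ℂ)-3)) * (2*((n:ℂ)+1)-3)))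
          = ((2*(n:ℂ)+1) * (2*(n:ℂ)+2)) *
            ((2*(n:ℂ)-1) * ((2:ℂ)^n * (n.factorial:ℂ) * ∏ q ∈ Icc 1 n, (2*(q:ℂ)-3))) := by
        rw [pow_succ, Nat.factorial_succ]
        push_cast
        ring
      push_cast at expand ⊢
      rw [expand, key]
      ring


noncomputable def Sf (z : ℂ) : ℂ :=
  ∑' p : ℕ, ((-1:ℂ)^p / ((2*p+1).factorial : ℂ)) * z^(2*p)

noncomputable def Tf (z : ℂ) : ℂ :=
  ∑' p : ℕ, ((-1:ℂ)^p * (2*(p:ℂ)+2) / ((2*p+3).factorial : ℂ)) * z^(2*p)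

lemma coef_summable (a : ℕ → ℂ) (M : ℝ) (ha : ∀ p, ‖a p‖ ≤ M) {z : ℂ} (hz : ‖z‖ ≤ 1/2) :
    Summable (fun p => a p * z^(2*p)) := by
  have hM : 0 ≤ M := le_trans (norm_nonneg _) (ha 0)
  apply Summable.of_norm_bounded (g := fun p : ℕ => M * (1/4:ℝ)^p)
  · exact (summable_geometric_of_lt_one (by norm_num) (by norm_num)).mul_left M
  · intro p
    rw [norm_mul, norm_pow]
    have h1 : ‖z‖^(2*p) ≤ (1/4:ℝ)^p := by
      rw [pow_mul]
      apply pow_le_pow_left₀ (by positivity)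
      nlinarith [norm_nonneg z]
    calc ‖a p‖ * ‖z‖^(2*p) ≤ M * (1/4:ℝ)^p :=
      mul_le_mul (ha p) h1 (by positivity) hM

lemma tail_bound (a : ℕ → ℂ) (M : ℝ) (ha : ∀ p, ‖a p‖ ≤ M) {z : ℂ} (hz : ‖z‖ ≤ 1/2) :
    ‖(∑' p : ℕ, a p * z^(2*p)) - a 0‖ ≤ 2*M*‖z‖^2 := by
  have hM : 0 ≤ M := le_trans (norm_nonneg _) (ha 0)
  have hsum := coef_summable a M ha hz
  rw [Summable.tsum_eq_zero_add hsum]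
  have h0 : a 0 * z^(2*0) = a 0 := by norm_num
  rw [h0, add_sub_cancel_left]
  have hgeo : HasSum (fun p : ℕ => (M*‖z‖^2) * (1/4:ℝ)^p) ((M*‖z‖^2) * (4/3 : ℝ)) := by
    have := hasSum_geometric_of_lt_one (r := (1/4:ℝ)) (by norm_num) (by norm_num)
    have h43 : (1 - (1/4:ℝ))⁻¹ = 4/3 := by norm_num
    rw [h43] at this
    exact this.mul_left _
  have hb : ∀ p : ℕ, ‖a (p+1) * z^(2*(p+1))‖ ≤ (M*‖z‖^2) * (1/4:ℝ)^p := by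
    intro p
    rw [norm_mul, norm_pow]
    have h1 : ‖z‖^(2*(p+1)) = ‖z‖^2 * (‖z‖^2)^p := by ring
    rw [h1]
    have h2 : (‖z‖^2)^p ≤ (1/4:ℝ)^p := by
      apply pow_le_pow_left₀ (by positivity)
      nlinarith [norm_nonneg z]
    calc ‖a (p+1)‖ * (‖z‖^2 * (‖z‖^2)^p) ≤ M * (‖z‖^2 * (1/4:ℝ)^p) := by
          apply mul_le_mul (ha _) _ (by positivity) hM
          exact mul_le_mul_of_nonneg_left h2 (by positivity)
      _ = (M*‖z‖^2) * (1/4:ℝ)^p := by ring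
  calc ‖∑' p : ℕ, a (p+1) * z^(2*(p+1))‖ ≤ (M*‖z‖^2) * (4/3:ℝ) :=
        tsum_of_norm_bounded hgeo hb
    _ ≤ 2*M*‖z‖^2 := by nlinarith [norm_nonneg z, sq_nonneg ‖z‖]

lemma Sf_coef_le : ∀ p : ℕ, ‖(-1:ℂ)^p / ((2*p+1).factorial : ℂ)‖ ≤ 1 := by
  intro p
  rw [norm_div, norm_pow, norm_neg, norm_one, one_pow]
  rw [Complex.norm_natCast]
  rw [div_le_one (by positivity)]
  exact_mod_cast Nat.one_le_iff_ne_zero.mpr (Nat.factorial_ne_zero _)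

lemma Tf_coef_le : ∀ p : ℕ, ‖(-1:ℂ)^p * (2*(p:ℂ)+2) / ((2*p+3).factorial : ℂ)‖ ≤ 1 := by
  intro p
  rw [norm_div, norm_mul, norm_pow, norm_neg, norm_one, one_pow, one_mul]
  have h1 : (2*(p:ℂ)+2) = ((2*p+2 : ℕ) : ℂ) := by push_cast; ring
  rw [h1, Complex.norm_natCast, Complex.norm_natCast]
  rw [div_le_one (by positivity)]
  have : (2*p+2) ≤ (2*p+3).factorial := le_trans (by omega) (Nat.self_le_factorial _)
  exact_mod_cast this

lemma Sf_zero : Sf 0 = 1 := by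
  rw [Sf, tsum_eq_single 0]
  · norm_num
  · intro p hp
    have : 2*p ≠ 0 := by omega
    simp [zero_pow this]

lemma Tf_zero : Tf 0 = 1/3 := by
  rw [Tf, tsum_eq_single 0]
  · norm_num [Nat.factorial]
  · intro p hp
    have : 2*p ≠ 0 := by omega
    simp [zero_pow this]

lemma Sf_near (z : ℂ) (hz : ‖z‖ ≤ 1/2) : ‖Sf z - 1‖ ≤ 2*‖z‖^2 := by
  have h := tail_bound (fun p => (-1:ℂ)^p / ((2*p+1).factorial : ℂ)) 1 Sf_coef_le hz
  calc ‖Sf z - 1‖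
      = ‖(∑' p : ℕ, ((-1:ℂ)^p / ((2*p+1).factorial : ℂ)) * z^(2*p)) -
        (fun p : ℕ => (-1:ℂ)^p / ((2*p+1).factorial : ℂ)) 0‖ := by
        rw [Sf]; norm_num [Nat.factorial]
    _ ≤ 2*1*‖z‖^2 := h
    _ = 2*‖z‖^2 := by ring

lemma Tf_near (z : ℂ) (hz : ‖z‖ ≤ 1/2) : ‖Tf z - 1/3‖ ≤ 2*‖z‖^2 := by
  have h := tail_bound (fun p => (-1:ℂ)^p * (2*(p:ℂ)+2) / ((2*p+3).factorial : ℂ)) 1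
    Tf_coef_le hz
  calc ‖Tf z - 1/3‖
      = ‖(∑' p : ℕ, ((-1:ℂ)^p * (2*(p:ℂ)+2) / ((2*p+3).factorial : ℂ)) * z^(2*p)) -
        (fun p : ℕ => (-1:ℂ)^p * (2*(p:ℂ)+2) / ((2*p+3).factorial : ℂ)) 0‖ := by
        rw [Tf]; norm_num [Nat.factorial]
    _ ≤ 2*1*‖z‖^2 := h
    _ = 2*‖z‖^2 := by ring

lemma hasDerivAt_zero_of_quad (f : ℂ → ℂ) (C : ℝ) (hC : 0 ≤ C)
    (h : ∀ z : ℂ, ‖z‖ ≤ 1/2 → ‖f z - f 0‖ ≤ C*‖z‖^2) : HasDerivAt f 0 0 := by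
  rw [hasDerivAt_iff_isLittleO]
  simp only [sub_zero, smul_zero, sub_zero]
  rw [Asymptotics.isLittleO_iff]
  intro c hc
  rw [Metric.eventually_nhds_iff]
  refine ⟨min (1/2) (c/(C+1)), by positivity, ?_⟩
  intro z hzd
  rw [dist_zero_right] at hzd
  have h1 : ‖z‖ ≤ 1/2 := le_of_lt (lt_of_lt_of_le hzd (min_le_left _ _))
  have h2 : ‖z‖ ≤ c/(C+1) := le_of_lt (lt_of_lt_of_le hzd (min_le_right _ _))
  have h3 : C*(c/(C+1)) ≤ c := by
    have he : C*(c/(C+1)) = c*(C/(C+1)) := by ring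
    have hd : C/(C+1) ≤ 1 := (div_le_one (by linarith)).mpr (by linarith)
    rw [he]
    calc c*(C/(C+1)) ≤ c*1 := mul_le_mul_of_nonneg_left hd (le_of_lt hc)
      _ = c := mul_one c
  calc ‖f z - f 0‖ ≤ C*‖z‖^2 := h z h1
    _ = (C*‖z‖)*‖z‖ := by ring
    _ ≤ (C*(c/(C+1)))*‖z‖ := by
        apply mul_le_mul_of_nonneg_right _ (norm_nonneg z)
        exact mul_le_mul_of_nonneg_left h2 hC
    _ ≤ c * ‖z‖ := mul_le_mul_of_nonneg_right h3 (norm_nonneg z)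


lemma fac_ne (n : ℕ) : ((n.factorial : ℂ)) ≠ 0 := by
  exact_mod_cast Nat.factorial_ne_zero n

lemma jb0_eq : jb 0 = Sf := by
  funext z
  rw [jb, Sf]
  apply tsum_congr
  intro p
  simp only [Nat.zero_add, zero_add]
  rw [c_id1 p]
  ring

lemma jb1_eq (z : ℂ) : jb 1 z = z * Tf z := by
  rw [jb, Tf, ← tsum_mul_left]
  apply tsum_congr
  intro p
  have h1 : 1 + p + 1 = p + 2 := by omega
  rw [h1, c_id2 p]
  have hfac : ((2*p+3).factorial : ℂ) = ((2*p+1).factorial : ℂ) * ((2*(p:ℂ)+2)*(2*(p:ℂ)+3)) := by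
    have h : (2*p+3).factorial = (2*p+1).factorial * ((2*p+2)*(2*p+3)) := by
      have e1 : 2*p+3 = (2*p+2)+1 := by omega
      have e2 : 2*p+2 = (2*p+1)+1 := by omega
      rw [e1, Nat.factorial_succ, e2, Nat.factorial_succ]
      ring
    push_cast [h]; ring
  rw [hfac]
  have hne1 : ((2*p+1).factorial : ℂ) ≠ 0 := fac_ne _
  have hne2 : (2*(p:ℂ)+2) ≠ 0 := by
    have : ((2*p+2 : ℕ) : ℂ) ≠ 0 := by exact_mod_cast (by omega : 2*p+2 ≠ 0)
    push_cast at this; convert this using 2 <;> push_cast <;> ring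
  have hne3 : (2*(p:ℂ)+3) ≠ 0 := by
    have : ((2*p+3 : ℕ) : ℂ) ≠ 0 := by exact_mod_cast (by omega : 2*p+3 ≠ 0)
    push_cast at this; convert this using 2 <;> push_cast <;> ring
  field_simp
  ring

lemma sin_eq_Sf (z : ℂ) : Complex.sin z = z * Sf z := by
  have h := Complex.hasSum_sin z
  have h2 : (fun p : ℕ => (-1:ℂ)^p * z^(2*p+1) / ((2*p+1).factorial : ℂ))
      = fun p : ℕ => z * (((-1:ℂ)^p / ((2*p+1).factorial : ℂ)) * z^(2*p)) := by
    funext p; ring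
  rw [Sf, ← tsum_mul_left, ← h2]
  exact h.tsum_eq.symm

lemma Sf_eq_of_ne {z : ℂ} (hz : z ≠ 0) : Sf z = Complex.sin z * z⁻¹ := by
  rw [sin_eq_Sf z]; field_simp

lemma sin_sub_Tf (z : ℂ) : Complex.sin z - z * Complex.cos z = z^3 * Tf z := by
  set b : ℕ → ℂ := fun p => (-1:ℂ)^p * z^(2*p+1) / ((2*p+1).factorial : ℂ)
    - z * ((-1:ℂ)^p * z^(2*p) / ((2*p).factorial : ℂ)) with hbdef
  have hb : HasSum b (Complex.sin z - z * Complex.cos z) :=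
    (Complex.hasSum_sin z).sub ((Complex.hasSum_cos z).mul_left z)
  have hb0 : b 0 = 0 := by simp [hbdef, Nat.factorial]
  have hshift : HasSum (fun p => b (p+1)) (Complex.sin z - z*Complex.cos z) := by
    rw [hasSum_nat_add_iff 1]
    simpa [hb0] using hb
  have heq : (fun p : ℕ => z^3 * (((-1:ℂ)^p * (2*(p:ℂ)+2) / ((2*p+3).factorial : ℂ)) * z^(2*p)))
      = fun p => b (p+1) := by
    funext p
    show _ = (-1:ℂ)^(p+1) * z^(2*(p+1)+1) / ((2*(p+1)+1).factorial : ℂ)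
      - z * ((-1:ℂ)^(p+1) * z^(2*(p+1)) / ((2*(p+1)).factorial : ℂ))
    have e1 : 2*(p+1)+1 = 2*p+3 := by omega
    have e2 : 2*(p+1) = 2*p+2 := by omega
    rw [e1, e2]
    have hfac : ((2*p+3).factorial : ℂ) = (2*(p:ℂ)+3) * ((2*p+2).factorial : ℂ) := by
      have h : (2*p+3).factorial = (2*p+3) * (2*p+2).factorial := by
        rw [show 2*p+3 = (2*p+2)+1 by omega, Nat.factorial_succ]
      push_cast [h]; ring
    rw [hfac]
    have hne : ((2*p+2).factorial : ℂ) ≠ 0 := fac_ne _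
    have hne3 : (2*(p:ℂ)+3) ≠ 0 := by
      have : ((2*p+3 : ℕ) : ℂ) ≠ 0 := by exact_mod_cast (by omega : 2*p+3 ≠ 0)
      push_cast at this; exact this
    field_simp
    ring
  rw [Tf, ← tsum_mul_left, heq, hshift.tsum_eq]

lemma Tf_eq_of_ne {z : ℂ} (hz : z ≠ 0) :
    Tf z = (Complex.sin z - z * Complex.cos z) * (z⁻¹*z⁻¹*z⁻¹) := by
  rw [sin_sub_Tf z]; field_simp

lemma yb0_eq {z : ℂ} (hz : z ≠ 0) : yb 0 z = -(Complex.cos z * z⁻¹) := by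
  rw [yb]
  have hterm : ∀ p : ℕ, ((-1 : ℂ) ^ p * z ^ (2 * (p : ℤ) - ((0:ℕ) : ℤ) - 1)) /
      ((2 : ℂ) ^ p * (p.factorial : ℂ) *
        ∏ q ∈ Finset.Icc 1 p, (-2 * (((0:ℕ)) : ℂ) + 2 * (q : ℂ) - 1))
      = ((-1:ℂ)^p * z^(2*p) / ((2*p).factorial : ℂ)) * z⁻¹ := by
    intro p
    have he : 2 * (p : ℤ) - ((0:ℕ) : ℤ) - 1 = (2*p : ℕ) + (-1 : ℤ) := by push_cast; ring
    rw [he, zpow_add₀ hz, zpow_natCast, zpow_neg_one]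
    have hprod : ∏ q ∈ Finset.Icc 1 p, (-2 * (((0:ℕ)) : ℂ) + 2 * (q : ℂ) - 1)
        = ∏ q ∈ Finset.Icc 1 p, (2 * (q : ℂ) - 1) := by
      apply Finset.prod_congr rfl; intro q _; push_cast; ring
    rw [hprod]
    have hc := c_id3 p
    rw [hc]
    push_cast
    ring
  rw [tsum_congr hterm, tsum_mul_right, (Complex.hasSum_cos z).tsum_eq]
  norm_num

lemma yb1_eq {z : ℂ} (hz : z ≠ 0) :
    yb 1 z = -(Complex.cos z * (z⁻¹*z⁻¹) + Complex.sin z * z⁻¹) := by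
  rw [yb]
  set t : ℕ → ℂ := fun p => ((-1 : ℂ) ^ p * z ^ (2 * (p : ℤ) - ((1:ℕ) : ℤ) - 1)) /
      ((2 : ℂ) ^ p * (p.factorial : ℂ) *
        ∏ q ∈ Finset.Icc 1 p, (-2 * (((1:ℕ)) : ℂ) + 2 * (q : ℂ) - 1)) with htdef
  set u : ℕ → ℂ := fun p => ((-1:ℂ)^p * z^(2*p) / ((2*p).factorial : ℂ)) * (z⁻¹*z⁻¹) with hudef
  have hu : HasSum u (Complex.cos z * (z⁻¹*z⁻¹)) := (Complex.hasSum_cos z).mul_right _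
  set v : ℕ → ℂ := fun p => t p - u p with hvdef
  have hv0 : v 0 = 0 := by
    simp only [hvdef, htdef, hudef]
    norm_num [zpow_two, mul_inv]
    ring
  have hvs : (fun p => v (p+1))
      = fun p : ℕ => (((-1:ℂ)^p * z^(2*p+1) / ((2*p+1).factorial : ℂ))) * z⁻¹ := by
    funext p
    have hc := c_id4 (p+1) (by omega)
    simp only [hvdef, htdef, hudef]
    have he : 2 * (((p+1):ℕ) : ℤ) - ((1:ℕ) : ℤ) - 1 = ((2*p : ℕ) : ℤ) := by push_cast; ring
    rw [he, zpow_natCast]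
    have hD : ((2:ℂ) ^ (p+1) * ((p+1).factorial : ℂ) *
        ∏ q ∈ Finset.Icc 1 (p+1), (-2 * (((1:ℕ)) : ℂ) + 2 * (q : ℂ) - 1))
        = (2:ℂ)^(p+1) * ((p+1).factorial : ℂ) * ∏ q ∈ Finset.Icc 1 (p+1), (2 * (q : ℂ) - 3) := by
      congr 1
      apply Finset.prod_congr rfl; intro q _; push_cast; ring
    rw [hD]
    -- from hc : (2*(p+1)-1) * D = -(2*(p+1))!
    have h21 : (2*(((p+1):ℕ):ℂ)-1) = 2*(p:ℂ)+1 := by push_cast; ring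
    rw [h21] at hc
    have hne1 : (2*(p:ℂ)+1) ≠ 0 := by
      have : ((2*p+1 : ℕ) : ℂ) ≠ 0 := by exact_mod_cast (by omega : 2*p+1 ≠ 0)
      push_cast at this; exact this
    have hDval : (2:ℂ)^(p+1) * ((p+1).factorial : ℂ) * ∏ q ∈ Finset.Icc 1 (p+1), (2 * (q : ℂ) - 3)
        = -(((2*(p+1)).factorial : ℕ) : ℂ) / (2*(p:ℂ)+1) := by
      field_simp
      linear_combination hc
    rw [hDval]
    have e2 : 2*(p+1) = 2*p+2 := by omega
    rw [e2]
    have hfac1 : ((2*p+2).factorial : ℂ) = (2*(p:ℂ)+2) * ((2*p+1).factorial : ℂ) := by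
      have h : (2*p+2).factorial = (2*p+2) * (2*p+1).factorial := by
        rw [show 2*p+2 = (2*p+1)+1 by omega, Nat.factorial_succ]
      push_cast [h]; ring
    rw [hfac1]
    have hne2 : ((2*p+1).factorial : ℂ) ≠ 0 := fac_ne _
    have hne3 : (2*(p:ℂ)+2) ≠ 0 := by
      have : ((2*p+2 : ℕ) : ℂ) ≠ 0 := by exact_mod_cast (by omega : 2*p+2 ≠ 0)
      push_cast at this; exact this
    field_simp
    ring
  have hvsum : HasSum v (Complex.sin z * z⁻¹) := by
    have h1 : HasSum (fun p => v (p+1)) (Complex.sin z * z⁻¹) := by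
      rw [hvs]
      exact (Complex.hasSum_sin z).mul_right _
    have := (hasSum_nat_add_iff 1).mp h1
    simpa [hv0] using this
  have ht : HasSum t (Complex.cos z * (z⁻¹*z⁻¹) + Complex.sin z * z⁻¹) := by
    have := hu.add hvsum
    have hfun : (fun p => u p + v p) = t := by
      funext p; simp [hvdef]
    rwa [hfun] at this
  rw [ht.tsum_eq]
  norm_num [Nat.factorial]

lemma hb0_eq {z : ℂ} (hz : z ≠ 0) :
    hb 0 z = -Complex.I * Complex.exp (Complex.I*z) * z⁻¹ := by
  rw [hb, jb0_eq, Sf_eq_of_ne hz, yb0_eq hz, mul_comm Complex.I z, Complex.exp_mul_I]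
  ring_nf
  rw [Complex.I_sq]
  ring

lemma hb1_eq {z : ℂ} (hz : z ≠ 0) :
    hb 1 z = -(z + Complex.I) * Complex.exp (Complex.I*z) * (z⁻¹*z⁻¹) := by
  have hexp : -(z + Complex.I) * (Complex.cos z + Complex.sin z * Complex.I)
      = (Complex.sin z - z*Complex.cos z) - Complex.I * (Complex.cos z + z * Complex.sin z) := by
    have h2 : Complex.I*Complex.I = -1 := Complex.I_mul_I
    linear_combination (-(Complex.sin z)) * h2
  rw [hb, jb1_eq, Tf_eq_of_ne hz, yb1_eq hz, mul_comm Complex.I z, Complex.exp_mul_I, hexp]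
  field_simp
  ring

lemma deriv_jb0 {z : ℂ} (hz : z ≠ 0) :
    deriv (jb 0) z = Complex.cos z * z⁻¹ + Complex.sin z * (-(z^2)⁻¹) := by
  rw [jb0_eq]
  have hev : Sf =ᶠ[nhds z] fun w => Complex.sin w * w⁻¹ := by
    filter_upwards [isOpen_compl_singleton.mem_nhds (by simpa using hz :
      z ∈ ({(0:ℂ)}ᶜ : Set ℂ))] with w hw
    exact Sf_eq_of_ne (by simpa using hw)
  rw [hev.deriv_eq]
  have hder : HasDerivAt (fun w => Complex.sin w * w⁻¹)
      (Complex.cos z * z⁻¹ + Complex.sin z * (-(z^2)⁻¹)) z :=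
    (Complex.hasDerivAt_sin z).mul (hasDerivAt_inv hz)
  exact hder.deriv

lemma xiB0_eq {z : ℂ} (hz : z ≠ 0) :
    xiB 0 z = -(Sf z * Complex.exp (Complex.I*z)) := by
  rw [xiB, jb0_eq, hb0_eq hz, Sf_eq_of_ne hz]
  have h2 : Complex.I*Complex.I = -1 := Complex.I_mul_I
  field_simp
  linear_combination (Complex.sin z) * h2

lemma zeta0_eq {z : ℂ} (hz : z ≠ 0) :
    -(1/2 : ℂ) + zetaB 0 z = z^2 * Tf z * Complex.exp (Complex.I*z) := by
  rw [zetaB, deriv_jb0 hz, hb0_eq hz, Tf_eq_of_ne hz]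
  have h2 : Complex.I*Complex.I = -1 := Complex.I_mul_I
  have hzy : z * z⁻¹ = 1 := mul_inv_cancel₀ hz
  linear_combination ((z^2 * Complex.cos z * z⁻¹^2 - z^2 * z⁻¹^3 * Complex.sin z) *
      Complex.exp (Complex.I*z)) * h2 +
    (z^2 * Complex.cos z * z⁻¹^2 * Complex.exp (Complex.I*z)) * hzy

lemma eta0_eq (lam mu : ℝ) (k : ℝ) (hw : kpC lam mu k ≠ 0) :
    eta0 lam mu k = Complex.I * Tf (kpC lam mu k) * (kpC lam mu k + Complex.I) *
      Complex.exp (Complex.I * kpC lam mu k) / ((lam:ℂ) + 2*(mu:ℂ)) := by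
  rw [eta0, jb1_eq, hb1_eq hw]
  set w := kpC lam mu k
  have hww : w * w⁻¹ = 1 := mul_inv_cancel₀ hw
  congr 1
  linear_combination (Complex.I * Tf w * (w + Complex.I) *
    Complex.exp (Complex.I*w) * (w*w⁻¹ + 1)) * hww

lemma rho0_eq (lam mu : ℝ) (k : ℝ) (hw : kpC lam mu k ≠ 0) (hL : (lam:ℂ) + 2*(mu:ℂ) ≠ 0) :
    rho0 lam mu k = -4*Complex.I*(mu:ℂ) * Tf (kpC lam mu k) * (kpC lam mu k + Complex.I) *
      Complex.exp (Complex.I * kpC lam mu k) / ((lam:ℂ) + 2*(mu:ℂ))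
      - (kpC lam mu k)^2 * Tf (kpC lam mu k) * Complex.exp (Complex.I * kpC lam mu k) := by
  rw [rho0, jb1_eq, hb1_eq hw, hb0_eq hw]
  set w := kpC lam mu k
  have h2 : Complex.I * Complex.I = -1 := Complex.I_mul_I
  have hww : w * w⁻¹ = 1 := mul_inv_cancel₀ hw
  field_simp
  linear_combination (w^2 * Tf w) * h2

noncomputable def wfC (lam mu tau : ℝ) : ℂ := ((tau / Real.sqrt (lam + 2*mu) : ℝ) : ℂ)

noncomputable def Phi (lam mu delta tau : ℝ) (s : ℂ) (κ : ℂ) : ℂ :=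
  -s^2 * Tf (κ*s) / Sf (κ*s) *
    (-4*Complex.I*(mu:ℂ) * Tf (κ * wfC lam mu tau) * (κ * wfC lam mu tau + Complex.I) *
        Complex.exp (Complex.I * (κ * wfC lam mu tau)) / ((lam:ℂ) + 2*(mu:ℂ))
      - (κ * wfC lam mu tau)^2 * Tf (κ * wfC lam mu tau) *
        Complex.exp (Complex.I * (κ * wfC lam mu tau)))
  + (delta:ℂ)*(tau:ℂ)^2 * (Complex.I * Tf (κ * wfC lam mu tau) * (κ * wfC lam mu tau + Complex.I) *
      Complex.exp (Complex.I * (κ * wfC lam mu tau)) / ((lam:ℂ) + 2*(mu:ℂ)))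

lemma kpC_factor (lam mu tau k : ℝ) : kpC lam mu (k*tau) = (k:ℂ) * wfC lam mu tau := by
  rw [kpC, wfC]
  push_cast
  ring

lemma Sf_diff : DifferentiableAt ℂ Sf 0 := by
  refine (hasDerivAt_zero_of_quad Sf 2 (by norm_num) ?_).differentiableAt
  intro z hz
  rw [Sf_zero]
  exact Sf_near z hz

lemma Tf_diff : DifferentiableAt ℂ Tf 0 := by
  refine (hasDerivAt_zero_of_quad Tf 2 (by norm_num) ?_).differentiableAt
  intro z hz
  rw [Tf_zero]
  exact Tf_near z hz

lemma comp_diff (f : ℂ → ℂ) (hf : DifferentiableAt ℂ f 0) (a : ℂ) :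
    DifferentiableAt ℂ (fun κ : ℂ => f (κ * a)) 0 := by
  have hlin : DifferentiableAt ℂ (fun κ : ℂ => κ * a) 0 := differentiableAt_id.mul_const a
  have h0 : (fun κ : ℂ => κ * a) 0 = 0 := zero_mul a
  have := DifferentiableAt.comp (0:ℂ) (h0 ▸ hf) hlin
  exact this

lemma Phi_diff (lam mu delta tau : ℝ) (s : ℂ) :
    DifferentiableAt ℂ (Phi lam mu delta tau s) 0 := by
  have hSne : Sf ((0:ℂ) * s) ≠ 0 := by rw [zero_mul, Sf_zero]; exact one_ne_zero
  set a := wfC lam mu tau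
  have hW : DifferentiableAt ℂ (fun κ : ℂ => κ * a) 0 := differentiableAt_id.mul_const a
  have hT1 : DifferentiableAt ℂ (fun κ : ℂ => Tf (κ * a)) 0 := comp_diff Tf Tf_diff a
  have hT2 : DifferentiableAt ℂ (fun κ : ℂ => Tf (κ * s)) 0 := comp_diff Tf Tf_diff s
  have hS2 : DifferentiableAt ℂ (fun κ : ℂ => Sf (κ * s)) 0 := comp_diff Sf Sf_diff s
  have hE : DifferentiableAt ℂ (fun κ : ℂ => Complex.exp (Complex.I * (κ * a))) 0 :=
    (hW.const_mul Complex.I).cexp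
  apply DifferentiableAt.add
  · apply DifferentiableAt.mul
    · exact ((differentiableAt_const _).mul hT2).div hS2 hSne
    · apply DifferentiableAt.sub
      · exact ((((differentiableAt_const _).mul hT1).mul (hW.add_const Complex.I)).mul hE).div_const _
      · exact (((hW.pow 2).mul hT1).mul hE)
  · apply DifferentiableAt.const_mul
    exact ((((differentiableAt_const _).mul hT1).mul (hW.add_const Complex.I)).mul hE).div_const _

lemma Phi_zero (lam mu delta tau : ℝ) (s : ℂ) (hL : (lam:ℂ) + 2*(mu:ℂ) ≠ 0) :
    Phi lam mu delta tau s 0 = -(4*(mu:ℂ)) * s^2 / (9*((lam:ℂ) + 2*(mu:ℂ)))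
      - (delta:ℂ)*(tau:ℂ)^2 / (3*((lam:ℂ) + 2*(mu:ℂ))) := by
  have h2 : Complex.I * Complex.I = -1 := Complex.I_mul_I
  rw [Phi]
  rw [zero_mul, zero_mul, Sf_zero, Tf_zero, mul_zero, Complex.exp_zero]
  field_simp
  linear_combination (36*s^2*(mu:ℂ) + 27*(delta:ℂ)*(tau:ℂ)^2) * ((lam:ℂ)+2*(mu:ℂ))⁻¹ * h2

lemma main_eq (lam mu delta tau : ℝ) (s : ℂ) (k : ℝ)
    (hk : ((k:ℂ)) ≠ 0) (hs : s ≠ 0) (hS : Sf ((k:ℂ)*s) ≠ 0)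
    (hw : kpC lam mu (k*tau) ≠ 0) (hL : (lam:ℂ) + 2*(mu:ℂ) ≠ 0) :
    (-(1 / 2) + zetaB 0 ((k : ℂ) * s)) * (xiB 0 ((k : ℂ) * s))⁻¹ * rho0 lam mu (k * tau) +
      (delta : ℂ) * (tau : ℂ) ^ 2 * (k : ℂ) ^ 2 * eta0 lam mu (k * tau)
    = (k:ℂ)^2 * Phi lam mu delta tau s k := by
  have hks : (k:ℂ)*s ≠ 0 := mul_ne_zero hk hs
  rw [zeta0_eq hks, xiB0_eq hks, rho0_eq _ _ _ hw hL, eta0_eq _ _ _ hw,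
    kpC_factor lam mu tau k, Phi]
  have hexp := Complex.exp_ne_zero (Complex.I * ((k:ℂ)*s))
  field_simp


end AuxLemmas

/-- Asymptotic expansion of the 0-th modal eigenvalue:
λ₀(k) = k²(−4μc/(9(λ+2μ)) − δτ²/(3(λ+2μ))) + O(k³), with ξ₀(ks) ≠ 0 for small k. -/
theorem lambda0_asymptotic (lam mu : ℝ) (hmu : 0 < mu) (hlm : 0 < 3 * lam + 2 * mu)
    (delta tau : ℝ) (hdelta : 0 < delta) (htau : 0 < tau)
    (c s : ℂ) (hs : s ≠ 0) (hsc : s ^ 2 = c) :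
    ∃ r > (0 : ℝ), ∃ C > (0 : ℝ), ∀ k : ℝ, 0 < k → k < r →
      xiB 0 ((k : ℂ) * s) ≠ 0 ∧
      ‖(-(1 / 2) + zetaB 0 ((k : ℂ) * s)) * (xiB 0 ((k : ℂ) * s))⁻¹ * rho0 lam mu (k * tau) +
          (delta : ℂ) * (tau : ℂ) ^ 2 * (k : ℂ) ^ 2 * eta0 lam mu (k * tau) -
          (k : ℂ) ^ 2 *
            (-(4 * (mu : ℂ)) * c / (9 * ((lam : ℂ) + 2 * (mu : ℂ))) -
              (delta : ℂ) * (tau : ℂ) ^ 2 / (3 * ((lam : ℂ) + 2 * (mu : ℂ))))‖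
        ≤ C * k ^ 3 := by
  have hL2 : (0:ℝ) < lam + 2*mu := by linarith
  have hLne : (lam:ℂ) + 2*(mu:ℂ) ≠ 0 := by
    have h : ((lam + 2*mu : ℝ) : ℂ) ≠ 0 := by exact_mod_cast ne_of_gt hL2
    push_cast at h; exact h
  have hd := Phi_diff lam mu delta tau s
  have hO := hd.isBigO_sub
  rw [Asymptotics.isBigO_iff] at hO
  obtain ⟨C0, hC0⟩ := hO
  rw [Metric.eventually_nhds_iff] at hC0
  obtain ⟨ε, hε, hball⟩ := hC0
  refine ⟨min ε (1/(2*(‖s‖+1))), lt_min hε (by positivity), max C0 1,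
    lt_of_lt_of_le one_pos (le_max_right C0 1), ?_⟩
  intro k hk hkr
  have hkc : ((k:ℂ)) ≠ 0 := by exact_mod_cast ne_of_gt hk
  have hknorm : ‖((k:ℂ))‖ = k := by
    rw [Complex.norm_real, Real.norm_eq_abs, abs_of_pos hk]
  have hkr2 : k < 1/(2*(‖s‖+1)) := lt_of_lt_of_le hkr (min_le_right _ _)
  have hks_norm : ‖(k:ℂ)*s‖ ≤ 1/2 := by
    rw [norm_mul, hknorm]
    have hsn : (0:ℝ) ≤ ‖s‖ := norm_nonneg s
    have h1 : k * ‖s‖ ≤ k * (‖s‖+1) := by nlinarith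
    have h2 : k * (‖s‖+1) < 1/2 := by
      have h3 := (lt_div_iff₀ (by positivity : (0:ℝ) < 2*(‖s‖+1))).mp hkr2
      nlinarith
    linarith
  have hSne : Sf ((k:ℂ)*s) ≠ 0 := by
    intro h
    have h1 := Sf_near _ hks_norm
    rw [h] at h1
    rw [zero_sub, norm_neg, norm_one] at h1
    nlinarith [norm_nonneg ((k:ℂ)*s)]
  have hw : kpC lam mu (k*tau) ≠ 0 := by
    rw [kpC]
    exact_mod_cast ne_of_gt (div_pos (mul_pos hk htau) (Real.sqrt_pos.mpr hL2))
  refine ⟨?_, ?_⟩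
  · rw [xiB0_eq (mul_ne_zero hkc hs)]
    exact neg_ne_zero.mpr (mul_ne_zero hSne (Complex.exp_ne_zero _))
  · have hme := main_eq lam mu delta tau s k hkc hs hSne hw hLne
    have hA : (-(4 * (mu : ℂ)) * c / (9 * ((lam : ℂ) + 2 * (mu : ℂ))) -
          (delta : ℂ) * (tau : ℂ) ^ 2 / (3 * ((lam : ℂ) + 2 * (mu : ℂ))))
        = Phi lam mu delta tau s 0 := by
      rw [Phi_zero lam mu delta tau s hLne, ← hsc]
    rw [hme, hA, ← mul_sub, norm_mul, norm_pow, hknorm]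
    have hdist : dist ((k:ℂ)) 0 < ε := by
      rw [dist_zero_right, hknorm]
      exact lt_of_lt_of_le hkr (min_le_left _ _)
    have hb := hball hdist
    rw [sub_zero, hknorm] at hb
    calc k^2 * ‖Phi lam mu delta tau s k - Phi lam mu delta tau s 0‖
        ≤ k^2 * (C0 * k) := mul_le_mul_of_nonneg_left hb (by positivity)
      _ ≤ max C0 1 * k^3 := by nlinarith [le_max_left C0 1, pow_pos hk 3]
end
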